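/- arXiv:2212.11316 — 3 statements merged into one kernel-verified Lean document; each statement's English description precedes it below -/
import Mathlib

section
/- Consider two coupled queueing systems G and L with the same initial queue length q and thresholds K^G_i ≥ K^L_i at every arrival i. Then almost surely Q^G(t) ≥ Q^L(t) and D^G(t) ≥ D^L(t) for all t ≥ 0, where D^S(t) is the number of departures from system S up to time t. -/
/-- Queue-length process of an admission-controlled queue observed at its potential
jump epochs: `arrival n = true` means the `n`-th epoch is an arrival (shared by the
coupled systems); otherwise it is a potential departure of the common Poisson process.
An arriving customer joins iff the queue length is strictly below the threshold `K n`;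
at a potential departure a nonempty queue loses one customer. -/
def queueLen (arrival : ℕ → Bool) (K : ℕ → ℕ) (q0 : ℕ) : ℕ → ℕ
  | 0 => q0
  | n + 1 =>
    let q := queueLen arrival K q0 n
    if arrival n then (if q < K n then q + 1 else q) else q - 1

/-- Number of departures (service completions) up to the `n`-th jump epoch. -/
def departures (arrival : ℕ → Bool) (K : ℕ → ℕ) (q0 : ℕ) : ℕ → ℕ
  | 0 => 0
  | n + 1 =>
    departures arrival K q0 n +
      (if arrival n then 0 else if 0 < queueLen arrival K q0 n then 1 else 0)

/-- Two coupled systems `G` and `L` with the same initial queue length `q` and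
thresholds `K^G_i ≥ K^L_i` at every arrival satisfy `Q^G ≥ Q^L` and `D^G ≥ D^L`
at all times. -/
theorem stmt_6 (arrival : ℕ → Bool) (KG KL : ℕ → ℕ) (q : ℕ)
    (hK : ∀ n, KL n ≤ KG n) :
    ∀ n : ℕ,
      queueLen arrival KL q n ≤ queueLen arrival KG q n ∧
      departures arrival KL q n ≤ departures arrival KG q n := by
  intro n
  induction n with
  | zero => exact ⟨le_refl _, le_refl _⟩
  | succ n ih =>
    obtain ⟨hq, hd⟩ := ih
    constructor
    · simp only [queueLen]
      split
      · split
        · split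
          · omega
          · have := hK n; omega
        · split <;> omega
      · omega
    · simp only [departures]
      split
      · omega
      · split
        · split <;> omega
        · omega
end

section
/- For an M/M/1 queue with arrival rate λ = μ = service rate, reward R = C/μ per service completion and holding cost rate C per customer, the dispatcher using static threshold 1 (admit a customer iff the queue is empty) starting from an empty queue has expected total net profit exactly 0 at every time t: E[G(t)] = E[G(τ_t)] − R + C·E[σ_s(t)] = 0. -/
/-!
Let `B n` be the start of the `n`-th service period and `S n ~ Exp(μ)` its length, independent
of `B n`. On `{B n = b}`, with `c = t - b ≥ 0`, the cycle earns `C/μ` with probability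
`P(S ≤ c)` and costs `C · E[min c S]`. These agree because the exponential density is `μ` times
the survival function: `P(S ≤ c) = μ ∫₀ᶜ P(S > u) du = μ E[min c S]`, the last step being the
layer-cake formula. So every cycle has zero expected net profit, and summing over cycles is
legitimate since the total service time before `t` is at most `t`, which also bounds the
expected number of completed cycles by `μ t`.
-/

open MeasureTheory ProbabilityTheory

lemma sum_range_min_add_sub_min_le {b s : ℕ → ℝ} (t : ℝ) (h : ∀ n, b n + s n ≤ b (n + 1))
    (N : ℕ) :
    ∑ n ∈ Finset.range N, (min t (b n + s n) - min t (b n)) ≤ min t (b N) - min t (b 0) :=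
  calc ∑ n ∈ Finset.range N, (min t (b n + s n) - min t (b n))
      ≤ ∑ n ∈ Finset.range N, (min t (b (n + 1)) - min t (b n)) :=
        Finset.sum_le_sum fun n _ => sub_le_sub_right (min_le_min_left t (h n)) _
    _ = min t (b N) - min t (b 0) := Finset.sum_range_sub (fun n => min t (b n)) N

lemma tsum_ofReal_min_add_sub_min_le {b s : ℕ → ℝ} (t : ℝ) (hs : ∀ n, 0 ≤ s n)
    (h : ∀ n, b n + s n ≤ b (n + 1)) :
    ∑' n, ENNReal.ofReal (min t (b n + s n) - min t (b n)) ≤ ENNReal.ofReal (t - min t (b 0)) := by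
  refine ENNReal.tsum_le_of_sum_range_le fun N => ?_
  rw [← ENNReal.ofReal_sum_of_nonneg fun n _ =>
    sub_nonneg.2 (min_le_min_left t (le_add_of_nonneg_right (hs n)))]
  exact ENNReal.ofReal_le_ofReal
    ((sum_range_min_add_sub_min_le t h N).trans (by linarith [min_le_left t (b N)]))

lemma sum_range_two_mul (f : ℕ → ℝ) (n : ℕ) :
    ∑ j ∈ Finset.range (2 * n), f j = ∑ k ∈ Finset.range n, (f (2 * k) + f (2 * k + 1)) := by
  induction n with
  | zero => simp
  | succ n ih =>
    rw [Finset.sum_range_succ, ← ih, Nat.mul_succ, Finset.sum_range_succ, Finset.sum_range_succ,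
      add_assoc]

namespace ProbabilityTheory

open Real Set

variable {mu : ℝ}

lemma expMeasure_eq_withDensity (mu : ℝ) :
    expMeasure mu = volume.withDensity (exponentialPDF mu) := rfl

lemma expMeasure_Iio_zero (mu : ℝ) : expMeasure mu (Iio 0) = 0 := by
  rw [expMeasure_eq_withDensity, withDensity_apply _ measurableSet_Iio]
  exact lintegral_exponentialPDF_of_nonpos le_rfl

lemma ae_nonneg_expMeasure (mu : ℝ) : ∀ᵐ s ∂expMeasure mu, 0 ≤ s :=
  measure_mono_null (fun s (hs : ¬ 0 ≤ s) => not_le.mp hs) (expMeasure_Iio_zero mu)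

lemma expMeasure_Ioi (hmu : 0 < mu) {u : ℝ} (hu : 0 ≤ u) :
    expMeasure mu (Ioi u) = ENNReal.ofReal (exp (-(mu * u))) := by
  have := isProbabilityMeasure_expMeasure hmu
  have hcdf : 0 ≤ 1 - exp (-(mu * u)) := by
    simpa using mul_nonneg hmu.le hu
  rw [← compl_Iic, prob_compl_eq_one_sub measurableSet_Iic, ← ofReal_cdf, cdf_expMeasure_eq hmu,
    if_pos hu, ← ENNReal.ofReal_one, ← ENNReal.ofReal_sub _ hcdf, sub_sub_cancel]

lemma exponentialPDF_eq_mul_expMeasure_Ioi (hmu : 0 < mu) {u : ℝ} (hu : 0 ≤ u) :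
    exponentialPDF mu u = ENNReal.ofReal mu * expMeasure mu (Ioi u) := by
  rw [exponentialPDF_of_nonneg hu, expMeasure_Ioi hmu hu, ENNReal.ofReal_mul hmu.le]

lemma expMeasure_Iic_eq_mul_setLIntegral (hmu : 0 < mu) {c : ℝ} (hc : 0 ≤ c) :
    expMeasure mu (Iic c) = ENNReal.ofReal mu * ∫⁻ u in Ioo 0 c, expMeasure mu (Ioi u) := by
  have hdisj : Disjoint (Iio (0 : ℝ)) (Icc 0 c) :=
    Set.disjoint_left.mpr fun u hu hu' => not_le.mpr hu hu'.1
  calc expMeasure mu (Iic c)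
      = ∫⁻ u in Iio 0 ∪ Icc 0 c, exponentialPDF mu u := by
        rw [expMeasure_eq_withDensity, withDensity_apply _ measurableSet_Iic,
          Iio_union_Icc_eq_Iic hc]
    _ = ∫⁻ u in Ioo 0 c, exponentialPDF mu u := by
        rw [lintegral_union measurableSet_Icc hdisj, lintegral_exponentialPDF_of_nonpos le_rfl,
          zero_add, Measure.restrict_congr_set Ioo_ae_eq_Icc]
    _ = ENNReal.ofReal mu * ∫⁻ u in Ioo 0 c, expMeasure mu (Ioi u) := by
        rw [← lintegral_const_mul' _ _ ENNReal.ofReal_ne_top]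
        exact setLIntegral_congr_fun measurableSet_Ioo
          fun u hu => exponentialPDF_eq_mul_expMeasure_Ioi hmu hu.1.le

lemma lintegral_min_expMeasure {c : ℝ} (hc : 0 ≤ c) :
    ∫⁻ s, ENNReal.ofReal (min c s) ∂expMeasure mu = ∫⁻ u in Ioo 0 c, expMeasure mu (Ioi u) := by
  have hset (u : ℝ) : expMeasure mu {s | u < min c s} =
      (Iio c).indicator (fun u => expMeasure mu (Ioi u)) u := by
    by_cases huc : u < c
    · simp [huc, indicator_of_mem, Ioi]
    · simp [huc]
  rw [lintegral_eq_lintegral_meas_lt _ ((ae_nonneg_expMeasure mu).mono fun s hs => le_min hc hs)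
    (measurable_const.min measurable_id).aemeasurable]
  simp only [hset]
  rw [lintegral_indicator measurableSet_Iio, Measure.restrict_restrict measurableSet_Iio,
    Iio_inter_Ioi]

lemma expMeasure_setOf_add_le (hmu : 0 < mu) (b t : ℝ) :
    expMeasure mu {s | b + s ≤ t} =
      ENNReal.ofReal mu * ∫⁻ s, ENNReal.ofReal (min t (b + s) - min t b) ∂expMeasure mu := by
  rcases le_or_gt b t with hb | hb
  · have hset : {s | b + s ≤ t} = Iic (t - b) := by
      ext s
      simp only [mem_ofPred_eq, mem_Iic]
      constructor <;> intro h <;> linarith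
    have hmin (s : ℝ) : min t (b + s) - min t b = min (t - b) s := by
      have hshift : min t (b + s) = b + min (t - b) s := by
        rw [← min_add_add_left, add_sub_cancel]
      rw [hshift, min_eq_right hb, add_sub_cancel_left]
    simp only [hset, hmin]
    rw [lintegral_min_expMeasure (sub_nonneg.2 hb),
      expMeasure_Iic_eq_mul_setLIntegral hmu (sub_nonneg.2 hb)]
  · have hzero :
        (fun s => ENNReal.ofReal (min t (b + s) - min t b)) =ᵐ[expMeasure mu] fun _ => 0 := by
      filter_upwards [ae_nonneg_expMeasure mu] with s hs
      rw [min_eq_left (by linarith), min_eq_left hb.le, sub_self, ENNReal.ofReal_zero]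
    rw [lintegral_congr_ae hzero, lintegral_zero, mul_zero]
    exact measure_mono_null (fun s (hs : b + s ≤ t) => show s < 0 by linarith)
      (expMeasure_Iio_zero mu)

section RandomVariables

variable {Ω : Type*} [MeasurableSpace Ω] {P : Measure Ω}

lemma ae_nonneg_of_map_eq_expMeasure {X : Ω → ℝ} (hX : Measurable X)
    (hlaw : P.map X = expMeasure mu) : ∀ᵐ ω ∂P, 0 ≤ X ω :=
  ae_of_ae_map hX.aemeasurable (hlaw ▸ ae_nonneg_expMeasure mu)

lemma map_eq_expMeasure_of_measure_lt [IsProbabilityMeasure P] (hmu : 0 < mu) {X : Ω → ℝ}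
    (hX : Measurable X)
    (htail : ∀ s : ℝ, 0 ≤ s → P {ω | s < X ω} = ENNReal.ofReal (exp (-mu * s))) :
    P.map X = expMeasure mu := by
  have := isProbabilityMeasure_expMeasure hmu
  have := Measure.isProbabilityMeasure_map (μ := P) hX.aemeasurable
  have hIoi_of_nonneg (u : ℝ) (hu : 0 ≤ u) : P.map X (Ioi u) = expMeasure mu (Ioi u) := by
    rw [Measure.map_apply hX measurableSet_Ioi, expMeasure_Ioi hmu hu, ← neg_mul]
    exact htail u hu
  have hIoi (u : ℝ) : P.map X (Ioi u) = expMeasure mu (Ioi u) := by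
    rcases le_or_gt 0 u with hu | hu
    · exact hIoi_of_nonneg u hu
    have hone (ν : Measure ℝ) [IsProbabilityMeasure ν] (h : ν (Ioi 0) = 1) : ν (Ioi u) = 1 :=
      le_antisymm prob_le_one (h ▸ measure_mono (Ioi_subset_Ioi hu.le))
    have hExp : expMeasure mu (Ioi 0) = 1 := by simp [expMeasure_Ioi hmu le_rfl]
    rw [hone (expMeasure mu) hExp, hone (P.map X) (hExp ▸ hIoi_of_nonneg 0 le_rfl)]
  refine Measure.ext_of_Iic _ _ fun c => ?_
  rw [← compl_Ioi, prob_compl_eq_one_sub measurableSet_Ioi,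
    prob_compl_eq_one_sub measurableSet_Ioi, hIoi]

lemma measure_add_le_eq_mul_lintegral [IsFiniteMeasure P] (hmu : 0 < mu) {B S : Ω → ℝ}
    (hB : Measurable B) (hS : Measurable S) (hind : IndepFun B S P)
    (hlaw : P.map S = expMeasure mu) (t : ℝ) :
    P {ω | B ω + S ω ≤ t} =
      ENNReal.ofReal mu * ∫⁻ ω, ENNReal.ofReal (min t (B ω + S ω) - min t (B ω)) ∂P := by
  have := isProbabilityMeasure_expMeasure hmu
  have hBS : Measurable fun ω => (B ω, S ω) := hB.prodMk hS
  have hmap : P.map (fun ω => (B ω, S ω)) = (P.map B).prod (expMeasure mu) :=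
    hlaw ▸ hind.map_prod_eq_prod_map_map hB.aemeasurable hS.aemeasurable
  have hset : MeasurableSet {p : ℝ × ℝ | p.1 + p.2 ≤ t} :=
    measurableSet_le (by fun_prop) measurable_const
  have hg : Measurable fun p : ℝ × ℝ => ENNReal.ofReal (min t (p.1 + p.2) - min t p.1) := by
    fun_prop
  calc P {ω | B ω + S ω ≤ t}
      = (P.map B).prod (expMeasure mu) {p | p.1 + p.2 ≤ t} := by
        rw [← hmap, Measure.map_apply hBS hset]
        rfl
    _ = ∫⁻ b, expMeasure mu {s | b + s ≤ t} ∂P.map B := Measure.prod_apply hset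
    _ = ∫⁻ b, ENNReal.ofReal mu *
          ∫⁻ s, ENNReal.ofReal (min t (b + s) - min t b) ∂expMeasure mu ∂P.map B := by
        simp only [expMeasure_setOf_add_le hmu]
    _ = ENNReal.ofReal mu * ∫⁻ ω, ENNReal.ofReal (min t (B ω + S ω) - min t (B ω)) ∂P := by
        rw [lintegral_const_mul' _ _ ENNReal.ofReal_ne_top, ← lintegral_prod _ hg.aemeasurable,
          ← hmap, lintegral_map hg hBS]

lemma integrable_tsum_of_nonneg {f : ℕ → Ω → ℝ} (hf : ∀ n, AEMeasurable (f n) P)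
    (hnn : ∀ᵐ ω ∂P, ∀ n, 0 ≤ f n ω)
    (hfin : ∑' n, ∫⁻ ω, ENNReal.ofReal (f n ω) ∂P ≠ ⊤) :
    Integrable (fun ω => ∑' n, f n ω) P ∧
      ∫ ω, ∑' n, f n ω ∂P = (∑' n, ∫⁻ ω, ENNReal.ofReal (f n ω) ∂P).toReal := by
  have heq : (fun ω => ∑' n, f n ω) =ᵐ[P] fun ω => (∑' n, ENNReal.ofReal (f n ω)).toReal := by
    filter_upwards [hnn] with ω hω
    -- also off the summable set, where both sides are junk `0`
    rw [ENNReal.tsum_toReal_eq fun _ => ENNReal.ofReal_ne_top]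
    exact tsum_congr fun n => (ENNReal.toReal_ofReal (hω n)).symm
  have hm : AEMeasurable (fun ω => ∑' n, ENNReal.ofReal (f n ω)) P :=
    AEMeasurable.tsum fun n => (hf n).ennreal_ofReal
  have hlint := lintegral_tsum (μ := P) fun n => (hf n).ennreal_ofReal
  rw [← hlint] at hfin ⊢
  exact ⟨(integrable_toReal_of_lintegral_ne_top hm hfin).congr heq.symm,
    by rw [integral_congr_ae heq, integral_toReal hm (ae_lt_top' hm hfin)]⟩

lemma tsum_lintegral_ofReal_min_add_sub_min_le {B S : ℕ → Ω → ℝ} (t : ℝ)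
    (hmeas : ∀ n, Measurable fun ω => min t (B n ω + S n ω) - min t (B n ω))
    (hB₀ : ∀ᵐ ω ∂P, 0 ≤ B 0 ω) (hS : ∀ᵐ ω ∂P, ∀ n, 0 ≤ S n ω)
    (hstep : ∀ᵐ ω ∂P, ∀ n, B n ω + S n ω ≤ B (n + 1) ω) :
    ∑' n, ∫⁻ ω, ENNReal.ofReal (min t (B n ω + S n ω) - min t (B n ω)) ∂P
      ≤ ∫⁻ _, ENNReal.ofReal (t - min t 0) ∂P := by
  rw [← lintegral_tsum fun n => (hmeas n).ennreal_ofReal.aemeasurable]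
  refine lintegral_mono_ae ?_
  filter_upwards [hB₀, hS, hstep] with ω h₀ hs hst
  exact (tsum_ofReal_min_add_sub_min_le t hs hst).trans
    (ENNReal.ofReal_le_ofReal (sub_le_sub_left (min_le_min_left t h₀) t))

theorem integral_reward_sub_holdingCost_eq_zero [IsFiniteMeasure P] (hmu : 0 < mu)
    {B S : ℕ → Ω → ℝ} (hB : ∀ n, Measurable (B n)) (hS : ∀ n, Measurable (S n))
    (hind : ∀ n, IndepFun (B n) (S n) P) (hlaw : ∀ n, P.map (S n) = expMeasure mu)
    (hB₀ : ∀ᵐ ω ∂P, 0 ≤ B 0 ω) (hstep : ∀ᵐ ω ∂P, ∀ n, B n ω + S n ω ≤ B (n + 1) ω)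
    (C t : ℝ) :
    ∫ ω, (C / mu * (∑' n, if B n ω + S n ω ≤ t then (1 : ℝ) else 0)
      - C * ∑' n, (min t (B n ω + S n ω) - min t (B n ω))) ∂P = 0 := by
  set reward : ℕ → Ω → ℝ := fun n ω => if B n ω + S n ω ≤ t then 1 else 0
  set cost : ℕ → Ω → ℝ := fun n ω => min t (B n ω + S n ω) - min t (B n ω)
  have hS_nonneg : ∀ᵐ ω ∂P, ∀ n, 0 ≤ S n ω :=
    ae_all_iff.2 fun n => ae_nonneg_of_map_eq_expMeasure (hS n) (hlaw n)
  have hcompleted_meas (n : ℕ) : MeasurableSet {ω | B n ω + S n ω ≤ t} :=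
    measurableSet_le ((hB n).add (hS n)) measurable_const
  have hreward_meas (n : ℕ) : Measurable (reward n) :=
    Measurable.ite (hcompleted_meas n) measurable_const measurable_const
  have hcost_meas (n : ℕ) : Measurable (cost n) := by
    have := hB n; have := hS n; fun_prop
  have hcost_fin : ∑' n, ∫⁻ ω, ENNReal.ofReal (cost n ω) ∂P ≠ ⊤ :=
    ne_top_of_le_ne_top (lintegral_const_lt_top ENNReal.ofReal_ne_top).ne
      (tsum_lintegral_ofReal_min_add_sub_min_le t hcost_meas hB₀ hS_nonneg hstep)
  have hreward_eq : ∑' n, ∫⁻ ω, ENNReal.ofReal (reward n ω) ∂P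
      = ENNReal.ofReal mu * ∑' n, ∫⁻ ω, ENNReal.ofReal (cost n ω) ∂P := by
    rw [← ENNReal.tsum_mul_left]
    refine tsum_congr fun n => ?_
    rw [← measure_add_le_eq_mul_lintegral hmu (hB n) (hS n) (hind n) (hlaw n) t,
      ← lintegral_indicator_one (hcompleted_meas n)]
    congr with ω
    by_cases h : B n ω + S n ω ≤ t <;> simp [reward, h]
  obtain ⟨hreward_int, hreward_integral⟩ := integrable_tsum_of_nonneg
    (fun n => (hreward_meas n).aemeasurable)
    (ae_of_all _ fun ω n => by by_cases h : B n ω + S n ω ≤ t <;> simp [reward, h])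
    (hreward_eq ▸ ENNReal.mul_ne_top ENNReal.ofReal_ne_top hcost_fin)
  obtain ⟨hcost_int, hcost_integral⟩ := integrable_tsum_of_nonneg
    (fun n => (hcost_meas n).aemeasurable)
    (hS_nonneg.mono fun ω hs n =>
      sub_nonneg.2 (min_le_min_left t (le_add_of_nonneg_right (hs n))))
    hcost_fin
  rw [integral_sub (hreward_int.const_mul _) (hcost_int.const_mul _), integral_const_mul,
    integral_const_mul, hreward_integral, hcost_integral, hreward_eq, ENNReal.toReal_mul,
    ENNReal.toReal_ofReal hmu.le]
  field_simp
  ring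

end RandomVariables

end ProbabilityTheory

theorem stmt_18_general {Ω : Type*} [MeasurableSpace Ω] (P : Measure Ω) [IsProbabilityMeasure P]
    (mu C : ℝ) (hmu : 0 < mu)
    (Z : ℕ → Ω → ℝ) (hmeas : ∀ n, Measurable (Z n))
    (hindep : iIndepFun Z P)
    (htail : ∀ n, ∀ s : ℝ, 0 ≤ s →
      P {ω | s < Z n ω} = ENNReal.ofReal (Real.exp (-mu * s)))
    (t : ℝ) :
    ∫ ω,
        ((C / mu) *
            (∑' n : ℕ,
              if (∑ k ∈ Finset.range (n + 1), (Z (2 * k) ω + Z (2 * k + 1) ω)) ≤ t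
              then (1 : ℝ) else 0)
          - C *
            (∑' n : ℕ,
              (min t (∑ k ∈ Finset.range (n + 1), (Z (2 * k) ω + Z (2 * k + 1) ω))
                - min t
                    ((∑ k ∈ Finset.range n, (Z (2 * k) ω + Z (2 * k + 1) ω))
                      + Z (2 * n) ω)))) ∂P = 0 := by
  have hlaw (n : ℕ) : P.map (Z n) = expMeasure mu :=
    map_eq_expMeasure_of_measure_lt hmu (hmeas n) (htail n)
  have hZ_nonneg : ∀ᵐ ω ∂P, ∀ n, 0 ≤ Z n ω :=
    ae_all_iff.2 fun n => ae_nonneg_of_map_eq_expMeasure (hmeas n) (hlaw n)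
  -- `B n` is the start of the `n`-th service period
  set B : ℕ → Ω → ℝ :=
    fun n ω => ∑ k ∈ Finset.range n, (Z (2 * k) ω + Z (2 * k + 1) ω) + Z (2 * n) ω
  have hB (n : ℕ) : B n = ∑ j ∈ Finset.range (2 * n + 1), Z j := by
    ext ω
    simp only [B, Finset.sum_apply, Finset.sum_range_succ _ (2 * n), sum_range_two_mul]
  simp only [Finset.sum_range_succ, ← add_assoc]
  refine integral_reward_sub_holdingCost_eq_zero hmu (B := B) (S := fun n => Z (2 * n + 1))
    (fun n => by simp only [B]; fun_prop) (fun n => hmeas _)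
    (fun n => hB n ▸ hindep.indepFun_finsetSum_of_notMem hmeas (by simp)) (fun n => hlaw _)
    ?_ ?_ C t
  · filter_upwards [hZ_nonneg] with ω hω
    simpa [B] using hω 0
  · filter_upwards [hZ_nonneg] with ω hω n
    simp only [B, Finset.sum_range_succ _ n, mul_add, mul_one, ← add_assoc]
    linarith [hω (2 * n + 2)]

/-- For an M/M/1 queue with arrival rate `λ = μ` equal to the service rate, reward
`R = C/μ` per service completion and holding cost rate `C`, the dispatcher using the
static threshold `1` (admit a customer iff the queue is empty) starting from an empty
queue has expected total net profit exactly `0` at every time `t ≥ 0`.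

The system alternates i.i.d. idle periods `A_n = Z_{2n} ~ Exp(μ)` and service periods
`S_n = Z_{2n+1} ~ Exp(μ)`; the `n`-th busy cycle ends at
`τ_{n+1} = Σ_{k≤n} (A_k + S_k)`, a reward `R = C/μ` is collected at each cycle
completion, and the holding cost `C` accrues exactly during the service portions. -/
theorem stmt_18 {Ω : Type*} [MeasurableSpace Ω] (P : Measure Ω) [IsProbabilityMeasure P]
    (mu C : ℝ) (hmu : 0 < mu) (hC : 0 < C)
    (Z : ℕ → Ω → ℝ) (hmeas : ∀ n, Measurable (Z n))
    (hindep : iIndepFun Z P)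
    (htail : ∀ n, ∀ s : ℝ, 0 ≤ s →
      P {ω | s < Z n ω} = ENNReal.ofReal (Real.exp (-mu * s)))
    (t : ℝ) (ht : 0 ≤ t) :
    ∫ ω,
        ((C / mu) *
            (∑' n : ℕ,
              if (∑ k ∈ Finset.range (n + 1), (Z (2 * k) ω + Z (2 * k + 1) ω)) ≤ t
              then (1 : ℝ) else 0)
          - C *
            (∑' n : ℕ,
              (min t (∑ k ∈ Finset.range (n + 1), (Z (2 * k) ω + Z (2 * k + 1) ω))
                - min t
                    ((∑ k ∈ Finset.range n, (Z (2 * k) ω + Z (2 * k + 1) ω))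
                      + Z (2 * n) ω)))) ∂P = 0 :=
  stmt_18_general P mu C hmu Z hmeas hindep htail t
end

section
/- For all x > 0 with x ≠ 1, ln(x) > 1 − 1/x; consequently, for y, z > 0 with y ≠ z, (y − z) + z(z/y)^K ln(z/y) > (y − z)(1 − (z/y)^K) > 0 for every K > 0. -/
/-- `ln(x) > 1 − 1/x` for all positive `x ≠ 1`; consequently, for `y, z > 0` with
`y ≠ z` and every real `K > 0`,
`(y − z) + z(z/y)^K ln(z/y) > (y − z)(1 − (z/y)^K) > 0`. -/
theorem stmt_19 :
    (∀ x : ℝ, 0 < x → x ≠ 1 → 1 - 1 / x < Real.log x) ∧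
    (∀ y z : ℝ, 0 < y → 0 < z → y ≠ z → ∀ K : ℝ, 0 < K →
      (y - z) * (1 - (z / y) ^ K)
          < (y - z) + z * (z / y) ^ K * Real.log (z / y) ∧
      0 < (y - z) * (1 - (z / y) ^ K)) := by
  have h1 : ∀ x : ℝ, 0 < x → x ≠ 1 → 1 - 1 / x < Real.log x := by
    intro x hx hne
    have hinv : (0:ℝ) < x⁻¹ := inv_pos.mpr hx
    have hinvne : x⁻¹ ≠ 1 := by
      intro h
      exact hne (by rw [← inv_inv x, h, inv_one])
    have h := Real.log_lt_sub_one_of_pos hinv hinvne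
    rw [Real.log_inv] at h
    rw [one_div]
    linarith
  refine ⟨h1, ?_⟩
  intro y z hy hz hne K hK
  have hrpos : 0 < z / y := div_pos hz hy
  have hrne : z / y ≠ 1 := by
    intro h
    exact hne ((div_eq_one_iff_eq hy.ne').mp h).symm
  have htpos : 0 < (z / y) ^ K := Real.rpow_pos_of_pos hrpos K
  have key : 0 < (y - z) + z * Real.log (z / y) := by
    have hlog := h1 (z / y) hrpos hrne
    have h1r : 1 / (z / y) = y / z := by field_simp
    rw [h1r] at hlog
    have hmul := (mul_lt_mul_iff_right₀ hz).mpr hlog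
    have hz' : z * (1 - y / z) = z - y := by field_simp
    nlinarith
  constructor
  · nlinarith [mul_pos htpos key]
  · rcases lt_or_gt_of_ne hne with h | h
    · have hr1 : 1 < z / y := (one_lt_div hy).mpr h
      have ht1 : 1 < (z / y) ^ K := Real.one_lt_rpow_iff_of_pos hrpos |>.mpr (Or.inl ⟨hr1, hK⟩)
      nlinarith
    · have hr1 : z / y < 1 := (div_lt_one hy).mpr h
      have ht1 : (z / y) ^ K < 1 := Real.rpow_lt_one hrpos.le hr1 hK
      nlinarith
end
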